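/- arXiv:1912.08695 — 3 statements merged into one kernel-verified Lean document; each statement's English description precedes it below -/
import Mathlib

section
/- Consider a financial system of n banks over the horizon [0,T] with constant liability rates dL_{ij}(t)=λ_{ij}dt (λ_{ii}=0, λ_{ij}≥0), external assets following correlated geometric Brownian motions dx_i(t)=x_i(t)[μ_i(t)dt+σ_i(t)dW_i(t)], recovery rate R_2∈[0,1), capital processes K_i(t)=x_i(t)e^{∫_t^T μ_i(s)ds} − L̄_i(T) − (1−R_2)Σ_{j∉A_t}(T−τ_j)λ_{ji}, default times τ_i=inf{t∈[0,T] : K_i(t)<0}, and solvent sets A_t={i : τ_i>t}, and assume no bank defaults at t=0 (i.e. x_i(0) > L̄_i(T)e^{−∫_0^T μ_i(s)ds} almost surely for every i). Then the fixed point problem defining the clearing capital processes admits a greatest and a least solution K↑ and K↓, with K↑_i(t) ≥ K↓_i(t) componentwise for every bank i and every time t∈[0,T]. -/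
open MeasureTheory ProbabilityTheory Set
open scoped Classical

noncomputable section

/-- `M` is a continuous centred Gaussian process with independent increments and
incremental variance `∫ σ(r)² dr`; this is the law of the Itô integral
`∫₀^t σ(s) dW(s)` of a deterministic integrand `σ` against a Brownian motion. -/
def IsGaussIntegral {Ω : Type*} [MeasurableSpace Ω] (P : Measure Ω) (σ : ℝ → ℝ)
    (M : ℝ → Ω → ℝ) : Prop :=
  (∀ t, Measurable (M t)) ∧
  (∀ᵐ ω ∂P, M 0 ω = 0 ∧ Continuous fun t => M t ω) ∧
  (∀ s t : ℝ, 0 ≤ s → s ≤ t →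
    P.map (fun ω => M t ω - M s ω) =
      gaussianReal 0 (∫ r in s..t, (σ r) ^ 2).toNNReal) ∧
  (∀ t : ℕ → ℝ, Monotone t →
    iIndepFun
      (fun i : ℕ => fun ω => M (t (i + 1)) ω - M (t i) ω) P)

/-- Default time of bank `j` given the capital path `K j`: the first time in `[0,T]`
at which the capital is negative. -/
def defaultTime (T : ℝ) (K : Fin n → ℝ → ℝ) (j : Fin n) : ℝ :=
  sInf {s : ℝ | s ∈ Icc 0 T ∧ K j s < 0}

/-- The Eisenberg–Noe style capital map: given candidate capital processes `K`
(through which the default times `τ_j` and the solvent sets are determined), the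
resulting capital of bank `i` at time `t` is
`K_i(t) = x_i(t) e^{∫_t^T μ_i} − L̄_i(T) − (1−R₂) Σ_{j ∉ A_t} (T−τ_j) λ_{ji}`. -/
def ENCapitalMap (n : ℕ) (T : ℝ) (lam : Fin n → Fin n → ℝ) (R₂ : ℝ)
    (μ : Fin n → ℝ → ℝ) (x : Fin n → ℝ → ℝ) (Lbar : Fin n → ℝ)
    (K : Fin n → ℝ → ℝ) (i : Fin n) (t : ℝ) : ℝ :=
  x i t * Real.exp (∫ s in t..T, μ i s) - Lbar i -
    (1 - R₂) * ∑ j, (if ∃ s ∈ Icc (0:ℝ) t, K j s < 0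
      then (T - defaultTime T K j) * lam j i else 0)

/-- `K` is a clearing capital process: a fixed point of the capital map on `[0,T]`. -/
def ENClearing (n : ℕ) (T : ℝ) (lam : Fin n → Fin n → ℝ) (R₂ : ℝ)
    (μ : Fin n → ℝ → ℝ) (x : Fin n → ℝ → ℝ) (Lbar : Fin n → ℝ)
    (K : Fin n → ℝ → ℝ) : Prop :=
  ∀ i : Fin n, ∀ t ∈ Icc (0:ℝ) T, ENCapitalMap n T lam R₂ μ x Lbar K i t = K i t

end

section AuxEN

open Set

variable {n : ℕ}

private lemma dt_nonneg (T : ℝ) (K : Fin n → ℝ → ℝ) (j : Fin n) :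
    0 ≤ defaultTime T K j :=
  Real.sInf_nonneg fun _ hs => hs.1.1

private lemma dt_le {T : ℝ} (hT : 0 ≤ T) (K : Fin n → ℝ → ℝ) (j : Fin n) :
    defaultTime T K j ≤ T := by
  rcases Set.eq_empty_or_nonempty {s : ℝ | s ∈ Icc 0 T ∧ K j s < 0} with h | ⟨s, hs⟩
  · rw [defaultTime, h, Real.sInf_empty]; exact hT
  · exact le_trans (csInf_le ⟨0, fun y hy => hy.1.1⟩ hs) hs.1.2

/-- The "penalty" part of the Eisenberg–Noe capital map. -/
private noncomputable def pen (T : ℝ) (lam : Fin n → Fin n → ℝ) (R₂ : ℝ)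
    (K : Fin n → ℝ → ℝ) (i : Fin n) (t : ℝ) : ℝ :=
  (1 - R₂) * ∑ j, (if ∃ s ∈ Icc (0:ℝ) t, K j s < 0
      then (T - defaultTime T K j) * lam j i else 0)

private lemma encap_eq (n : ℕ) (T : ℝ) (lam : Fin n → Fin n → ℝ) (R₂ : ℝ)
    (μ : Fin n → ℝ → ℝ) (x : Fin n → ℝ → ℝ) (Lbar : Fin n → ℝ)
    (K : Fin n → ℝ → ℝ) (i : Fin n) (t : ℝ) :
    ENCapitalMap n T lam R₂ μ x Lbar K i t
      = x i t * Real.exp (∫ s in t..T, μ i s) - Lbar i - pen T lam R₂ K i t := rfl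

private lemma pen_nonneg {T : ℝ} (hT : 0 ≤ T) {lam : Fin n → Fin n → ℝ} {R₂ : ℝ}
    (hR : R₂ ≤ 1) (hlam : ∀ a b, 0 ≤ lam a b)
    (K : Fin n → ℝ → ℝ) (i : Fin n) (t : ℝ) : 0 ≤ pen T lam R₂ K i t := by
  refine mul_nonneg (by linarith) (Finset.sum_nonneg fun j _ => ?_)
  split_ifs
  · exact mul_nonneg (sub_nonneg.2 (dt_le hT K j)) (hlam j i)
  · exact le_rfl

private lemma pen_le {T : ℝ} (hT : 0 ≤ T) {lam : Fin n → Fin n → ℝ} {R₂ : ℝ}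
    (hR : R₂ ≤ 1) (hlam : ∀ a b, 0 ≤ lam a b)
    (K : Fin n → ℝ → ℝ) (i : Fin n) (t : ℝ) :
    pen T lam R₂ K i t ≤ (1 - R₂) * ∑ j, T * lam j i := by
  refine mul_le_mul_of_nonneg_left (Finset.sum_le_sum fun j _ => ?_) (by linarith)
  split_ifs
  · exact mul_le_mul_of_nonneg_right (sub_le_self T (dt_nonneg T K j)) (hlam j i)
  · exact mul_nonneg hT (hlam j i)

/-- Antitonicity of the penalty: larger capitals give smaller penalties. -/
private lemma pen_anti {T : ℝ} (hT : 0 ≤ T) {lam : Fin n → Fin n → ℝ} {R₂ : ℝ}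
    (hR : R₂ ≤ 1) (hlam : ∀ a b, 0 ≤ lam a b) {t : ℝ} (ht : t ≤ T)
    {K K' : Fin n → ℝ → ℝ} (hK : ∀ j s, s ∈ Icc (0:ℝ) T → K j s ≤ K' j s) (i : Fin n) :
    pen T lam R₂ K' i t ≤ pen T lam R₂ K i t := by
  refine mul_le_mul_of_nonneg_left (Finset.sum_le_sum fun j _ => ?_) (by linarith)
  by_cases h' : ∃ s ∈ Icc (0:ℝ) t, K' j s < 0
  · obtain ⟨s, hs, hs'⟩ := h'
    have hsT : s ∈ Icc (0:ℝ) T := ⟨hs.1, le_trans hs.2 ht⟩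
    have h : ∃ s ∈ Icc (0:ℝ) t, K j s < 0 :=
      ⟨s, hs, lt_of_le_of_lt (hK j s hsT) hs'⟩
    rw [if_pos ⟨s, hs, hs'⟩, if_pos h]
    refine mul_le_mul_of_nonneg_right (sub_le_sub_left ?_ T) (hlam j i)
    refine csInf_le_csInf ⟨0, fun y hy => hy.1.1⟩ ⟨s, hsT, hs'⟩ ?_
    rintro y ⟨hy, hy'⟩
    exact ⟨hy, lt_of_le_of_lt (hK j y hy) hy'⟩
  · rw [if_neg h']
    split_ifs with h
    · exact mul_nonneg (sub_nonneg.2 (dt_le hT K j)) (hlam j i)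
    · exact le_rfl

private lemma pen_congr {T : ℝ} (hT : 0 ≤ T) {lam : Fin n → Fin n → ℝ} {R₂ : ℝ}
    (hR : R₂ ≤ 1) (hlam : ∀ a b, 0 ≤ lam a b) {t : ℝ} (ht : t ≤ T)
    {K K' : Fin n → ℝ → ℝ} (hK : ∀ j s, s ∈ Icc (0:ℝ) T → K j s = K' j s) (i : Fin n) :
    pen T lam R₂ K i t = pen T lam R₂ K' i t :=
  le_antisymm
    (pen_anti hT hR hlam ht (fun j s hs => (hK j s hs).ge) i)
    (pen_anti hT hR hlam ht (fun j s hs => (hK j s hs).le) i)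

end AuxEN

/-- in the dynamic Eisenberg–Noe model with constant liability rates,
geometric Brownian motion external assets, recovery rate `R₂ ∈ [0,1)` and no default
at time `0`, the fixed point problem for the clearing capital processes admits
(almost surely) a greatest and a least solution `K↑ ≥ K↓`. -/
theorem eisenberg_noe_greatest_least_clearing
    {Ω : Type*} [MeasurableSpace Ω] (P : Measure Ω) [IsProbabilityMeasure P]
    (n : ℕ) (T : ℝ) (hT : 0 < T)
    -- constant interbank liability rates `λ_{ij} ≥ 0`, `λ_{ii} = 0`,
    -- and external (societal) liability rates `λ_{i0} ≥ 0`
    (lam : Fin n → Fin n → ℝ) (lam0 : Fin n → ℝ)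
    (hlam_nonneg : ∀ i j, 0 ≤ lam i j) (hlam_diag : ∀ i, lam i i = 0)
    (hlam0 : ∀ i, 0 ≤ lam0 i)
    (R₂ : ℝ) (hR₂ : R₂ ∈ Set.Ico (0:ℝ) 1)
    -- external assets: (possibly correlated) geometric Brownian motions
    (μ σ : Fin n → ℝ → ℝ)
    (x : Fin n → ℝ → Ω → ℝ) (hx0 : ∀ i, Measurable (x i 0))
    (M : Fin n → ℝ → Ω → ℝ) (hM : ∀ i, IsGaussIntegral P (σ i) (M i))
    (hx : ∀ (i : Fin n) (t : ℝ), 0 ≤ t → ∀ ω,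
      x i t ω = x i 0 ω *
        Real.exp ((∫ s in (0:ℝ)..t, (μ i s - σ i s ^ 2 / 2)) + M i t ω))
    -- net liabilities `L̄_i(T) = Tλ_{i0} + T Σ_j (λ_{ij} − λ_{ji})`
    (Lbar : Fin n → ℝ)
    (hLbar : ∀ i, Lbar i = T * lam0 i + T * ∑ j, (lam i j - lam j i))
    -- no bank defaults at time `0`:
    -- `x_i(0) > L̄_i(T) e^{−∫₀^T μ_i}` almost surely for every `i`
    (hinit : ∀ᵐ ω ∂P, ∀ i,
      x i 0 ω > Lbar i * Real.exp (-(∫ s in (0:ℝ)..T, μ i s))) :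
    ∀ᵐ ω ∂P, ∃ Kup Kdown : Fin n → ℝ → ℝ,
      ENClearing n T lam R₂ μ (fun i t => x i t ω) Lbar Kup ∧
      ENClearing n T lam R₂ μ (fun i t => x i t ω) Lbar Kdown ∧
      (∀ i : Fin n, ∀ t ∈ Set.Icc (0:ℝ) T, Kdown i t ≤ Kup i t) ∧
      ∀ K : Fin n → ℝ → ℝ,
        ENClearing n T lam R₂ μ (fun i t => x i t ω) Lbar K →
        ∀ i : Fin n, ∀ t ∈ Set.Icc (0:ℝ) T, Kdown i t ≤ K i t ∧ K i t ≤ Kup i t := by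
  obtain ⟨hR0, hR1⟩ := hR₂
  have hR1' : R₂ ≤ 1 := le_of_lt hR1
  have hRn : (0:ℝ) ≤ 1 - R₂ := by linarith
  have hT0 : (0:ℝ) ≤ T := le_of_lt hT
  refine Filter.Eventually.of_forall fun ω => ?_
  set xω : Fin n → ℝ → ℝ := fun i t => x i t ω with hxω
  set C : ℝ := (1 - R₂) * ∑ i, ∑ j, T * lam j i with hCdef
  have hCb : ∀ i : Fin n, (1 - R₂) * ∑ j, T * lam j i ≤ C := by
    intro i
    refine mul_le_mul_of_nonneg_left ?_ hRn
    exact Finset.single_le_sum (f := fun i => ∑ j, T * lam j i)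
      (fun i _ => Finset.sum_nonneg fun j _ => mul_nonneg hT0 (hlam_nonneg j i))
      (Finset.mem_univ i)
  have hC0 : (0:ℝ) ≤ C :=
    mul_nonneg hRn (Finset.sum_nonneg fun i _ =>
      Finset.sum_nonneg fun j _ => mul_nonneg hT0 (hlam_nonneg j i))
  haveI : Fact ((0:ℝ) ≤ C) := ⟨hC0⟩
  set xe : Fin n → ℝ → ℝ :=
    fun i t => x i t ω * Real.exp (∫ s in t..T, μ i s) - Lbar i with hxe
  have hmem : ∀ (K : Fin n → ℝ → ℝ) (i : Fin n) (t : ℝ),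
      pen T lam R₂ K i t ∈ Set.Icc (0:ℝ) C := fun K i t =>
    ⟨pen_nonneg hT0 hR1' hlam_nonneg K i t,
      le_trans (pen_le hT0 hR1' hlam_nonneg K i t) (hCb i)⟩
  let toK : (Fin n → ℝ → Set.Icc (0:ℝ) C) → Fin n → ℝ → ℝ :=
    fun D i t => xe i t - (D i t : ℝ)
  let G : (Fin n → ℝ → Set.Icc (0:ℝ) C) → (Fin n → ℝ → Set.Icc (0:ℝ) C) :=
    fun D i t =>
      if ht : t ∈ Set.Icc (0:ℝ) T then ⟨pen T lam R₂ (toK D) i t, hmem _ i t⟩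
      else ⟨0, Set.left_mem_Icc.2 hC0⟩
  have hGmono : Monotone G := by
    intro D D' hle i t
    by_cases ht : t ∈ Set.Icc (0:ℝ) T
    · show (if ht : t ∈ Set.Icc (0:ℝ) T then _ else _) ≤ _
      rw [dif_pos ht]
      show (⟨pen T lam R₂ (toK D) i t, hmem _ i t⟩ : Set.Icc (0:ℝ) C)
        ≤ if ht : t ∈ Set.Icc (0:ℝ) T then ⟨pen T lam R₂ (toK D') i t, hmem _ i t⟩
          else ⟨0, Set.left_mem_Icc.2 hC0⟩
      rw [dif_pos ht, Subtype.mk_le_mk]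
      exact pen_anti hT0 hR1' hlam_nonneg ht.2
        (fun j s _ => sub_le_sub_left (Subtype.coe_le_coe.2 (hle j s)) _) i
    · show (if ht : t ∈ Set.Icc (0:ℝ) T then _ else _)
        ≤ (if ht : t ∈ Set.Icc (0:ℝ) T then _ else _)
      rw [dif_neg ht, dif_neg ht]
  let Gho : (Fin n → ℝ → Set.Icc (0:ℝ) C) →o (Fin n → ℝ → Set.Icc (0:ℝ) C) :=
    ⟨G, hGmono⟩
  have hup : G (OrderHom.lfp Gho) = OrderHom.lfp Gho := OrderHom.map_lfp Gho
  have hdn : G (OrderHom.gfp Gho) = OrderHom.gfp Gho := OrderHom.map_gfp Gho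
  -- value of a fixed point on [0,T]
  have hfixval : ∀ D, G D = D → ∀ i t, t ∈ Set.Icc (0:ℝ) T →
      ((D i t : ℝ)) = pen T lam R₂ (toK D) i t := by
    intro D hD i t ht
    have h1 : D i t = ⟨pen T lam R₂ (toK D) i t, hmem _ i t⟩ := by
      conv_lhs => rw [← hD]
      exact dif_pos ht
    rw [h1]
  -- every fixed point of G yields a clearing capital process
  have hclear : ∀ D, G D = D →
      ENClearing n T lam R₂ μ xω Lbar (toK D) := by
    intro D hD i t ht
    rw [encap_eq, ← hfixval D hD i t ht]
  -- every clearing capital process yields a fixed point of G agreeing with it on [0,T]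
  have hKfix : ∀ K : Fin n → ℝ → ℝ, ENClearing n T lam R₂ μ xω Lbar K →
      ∃ D, G D = D ∧ ∀ i t, t ∈ Set.Icc (0:ℝ) T → (D i t : ℝ) = xe i t - K i t := by
    intro K hK
    refine ⟨fun i t => if ht : t ∈ Set.Icc (0:ℝ) T then ⟨pen T lam R₂ K i t, hmem _ i t⟩
      else ⟨0, Set.left_mem_Icc.2 hC0⟩, ?_, ?_⟩
    · set DK : Fin n → ℝ → Set.Icc (0:ℝ) C := fun i t =>
        if ht : t ∈ Set.Icc (0:ℝ) T then ⟨pen T lam R₂ K i t, hmem _ i t⟩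
        else ⟨0, Set.left_mem_Icc.2 hC0⟩ with hDK
      have hagree : ∀ j s, s ∈ Set.Icc (0:ℝ) T → toK DK j s = K j s := by
        intro j s hs
        have : (DK j s : ℝ) = pen T lam R₂ K j s := by
          rw [hDK]; simp only [dif_pos hs]
        show xe j s - (DK j s : ℝ) = K j s
        rw [this, ← hK j s hs, encap_eq]
      funext i t
      by_cases ht : t ∈ Set.Icc (0:ℝ) T
      · have h1 : G DK i t = ⟨pen T lam R₂ (toK DK) i t, hmem _ i t⟩ := dif_pos ht
        have h2 : DK i t = ⟨pen T lam R₂ K i t, hmem _ i t⟩ := dif_pos ht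
        rw [h1, h2, Subtype.mk_eq_mk]
        exact pen_congr hT0 hR1' hlam_nonneg ht.2 hagree i
      · have h1 : G DK i t = ⟨0, Set.left_mem_Icc.2 hC0⟩ := dif_neg ht
        have h2 : DK i t = ⟨0, Set.left_mem_Icc.2 hC0⟩ := dif_neg ht
        rw [h1, h2]
    · intro i t ht
      simp only [dif_pos ht]
      rw [← hK i t ht, encap_eq]
      ring
  refine ⟨toK (OrderHom.lfp Gho), toK (OrderHom.gfp Gho),
    hclear _ hup, hclear _ hdn, ?_, ?_⟩
  · intro i t ht
    have hle : OrderHom.lfp Gho ≤ OrderHom.gfp Gho :=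
      OrderHom.lfp_le_fixed Gho hdn
    exact sub_le_sub_left (Subtype.coe_le_coe.2 (hle i t)) _
  · intro K hK i t ht
    obtain ⟨D, hD, hDval⟩ := hKfix K hK
    have h1 : OrderHom.lfp Gho ≤ D := OrderHom.lfp_le_fixed Gho hD
    have h2 : D ≤ OrderHom.gfp Gho :=
      Gho.le_gfp (show D ≤ Gho D from le_of_eq hD.symm)
    constructor
    · have := sub_le_sub_left (Subtype.coe_le_coe.2 (h2 i t)) (xe i t)
      calc toK (OrderHom.gfp Gho) i t ≤ xe i t - (D i t : ℝ) := this
        _ = K i t := by rw [hDval i t ht]; ring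
    · have := sub_le_sub_left (Subtype.coe_le_coe.2 (h1 i t)) (xe i t)
      calc K i t = xe i t - (D i t : ℝ) := by rw [hDval i t ht]; ring
        _ ≤ toK (OrderHom.lfp Gho) i t := this
end

section
/- Let F:ℝ₊→ℝ be Lipschitz continuous and increasing, let g:[0,T]→ℝ₊ be continuous, nonnegative and decreasing, and let ℓ, ℓ̄:[0,T]→ℝ₊ be increasing functions of finite variation with ℓ(0)=ℓ̄(0)=0. Then for every t∈[0,T], F(∫₀^t g(s)dℓ(s)) − F(∫₀^t g(s)dℓ̄(s)) ≤ g(0) ‖F‖_Lip sup_{s≤t}(ℓ(s) − ℓ̄(s))⁺, where ‖F‖_Lip is the Lipschitz constant of F and the integrals are Riemann–Stieltjes integrals. -/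
open MeasureTheory Set

/-- the deterministic Lipschitz estimate for Stieltjes integrals of a
decreasing nonnegative integrand `g` against increasing càdlàg paths `ℓ, ℓ̄` starting
at `0`:
`F(∫₀ᵗ g dℓ) − F(∫₀ᵗ g dℓ̄) ≤ g(0) ‖F‖_Lip sup_{s≤t} (ℓ(s) − ℓ̄(s))⁺`. -/
theorem stieltjes_integral_feedback_estimate
    (T : ℝ) (hT : 0 < T)
    (F : ℝ → ℝ) (K : NNReal) (hFlip : LipschitzWith K F) (hFmono : Monotone F)
    (g : ℝ → ℝ) (hg_cont : ContinuousOn g (Icc 0 T))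
    (hg_nonneg : ∀ s ∈ Icc (0:ℝ) T, 0 ≤ g s)
    (hg_anti : AntitoneOn g (Icc 0 T))
    (ℓ ℓ' : StieltjesFunction ℝ) (hℓ0 : ℓ 0 = 0) (hℓ'0 : ℓ' 0 = 0)
    (t : ℝ) (ht : t ∈ Icc 0 T) :
    F (∫ s in Ioc (0:ℝ) t, g s ∂ℓ.measure) - F (∫ s in Ioc (0:ℝ) t, g s ∂ℓ'.measure) ≤
      g 0 * (K : ℝ) * sSup {d : ℝ | ∃ s ∈ Icc (0:ℝ) t, d = max (ℓ s - ℓ' s) 0} := by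
  obtain ⟨ht0, htT⟩ := ht
  have hIccsub : Icc (0:ℝ) t ⊆ Icc 0 T := Icc_subset_Icc le_rfl htT
  have h0mem : (0:ℝ) ∈ Icc (0:ℝ) T := ⟨le_rfl, le_of_lt hT⟩
  have htmem : t ∈ Icc (0:ℝ) t := ⟨ht0, le_rfl⟩
  have hg0 : 0 ≤ g 0 := hg_nonneg 0 h0mem
  -- the sup
  set D : Set ℝ := {d : ℝ | ∃ s ∈ Icc (0:ℝ) t, d = max (ℓ s - ℓ' s) 0} with hD_def
  set S : ℝ := sSup D with hS_def
  have hDbdd : BddAbove D := by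
    refine ⟨max (ℓ t) 0, ?_⟩
    rintro d ⟨s, hs, rfl⟩
    refine max_le_max ?_ le_rfl
    have h1 : ℓ s ≤ ℓ t := ℓ.mono hs.2
    have h2 : (0:ℝ) ≤ ℓ' s := hℓ'0 ▸ ℓ'.mono hs.1
    linarith
  have h0D : (0:ℝ) ∈ D := ⟨0, ⟨le_rfl, ht0⟩, by simp [hℓ0, hℓ'0]⟩
  have hS0 : 0 ≤ S := le_csSup hDbdd h0D
  have hle : ∀ u ∈ Icc (0:ℝ) t, ℓ u ≤ ℓ' u + S := by
    intro u hu
    have : max (ℓ u - ℓ' u) 0 ≤ S := le_csSup hDbdd ⟨u, hu, rfl⟩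
    have := (le_max_left (ℓ u - ℓ' u) 0).trans this
    linarith
  -- the clamp and the Stieltjes function of -g
  set c : ℝ → ℝ := fun s => min (max s 0) t with hc_def
  have hc_mem : ∀ s, c s ∈ Icc (0:ℝ) t :=
    fun s => ⟨le_min (le_max_right _ _) ht0, min_le_right _ _⟩
  have hc_cont : Continuous c := (continuous_id.max continuous_const).min continuous_const
  have hc_mono : Monotone c := fun a b h => min_le_min (max_le_max h le_rfl) le_rfl
  have hgc_cont : Continuous fun s => g (c s) :=
    hg_cont.comp_continuous hc_cont fun s => hIccsub (hc_mem s)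
  set f : StieltjesFunction ℝ :=
    { toFun := fun s => - g (c s)
      mono' := fun a b h =>
        neg_le_neg (hg_anti (hIccsub (hc_mem a)) (hIccsub (hc_mem b)) (hc_mono h))
      right_continuous' := fun x => (hgc_cont.neg.continuousAt).continuousWithinAt } with hf_def
  have hf_cont : Continuous (f : ℝ → ℝ) := hgc_cont.neg
  have hc_eq : ∀ s ∈ Icc (0:ℝ) t, c s = s := by
    intro s hs
    simp only [hc_def]
    rw [max_eq_left hs.1, min_eq_left hs.2]
  have hf_eq : ∀ s ∈ Icc (0:ℝ) t, f s = - g s := by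
    intro s hs
    show - g (c s) = - g s
    rw [hc_eq s hs]
  have hf0 : f 0 = - g 0 := hf_eq 0 ⟨le_rfl, ht0⟩
  have hft : f t = - g t := hf_eq t htmem
  haveI : NullSingletonClass f.measure := by
    constructor
    intro u
    rw [StieltjesFunction.measure_singleton]
    have : Function.leftLim (f : ℝ → ℝ) u = f u :=
      leftLim_eq_of_tendsto hf_cont.continuousWithinAt
    simp [this]
  haveI hνfin : IsFiniteMeasure (f.measure.restrict (Ioc 0 t)) := by
    constructor
    rw [Measure.restrict_apply_univ, StieltjesFunction.measure_Ioc]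
    exact ENNReal.ofReal_lt_top
  -- key integration-by-parts identity
  have key : ∀ L : StieltjesFunction ℝ,
      ∫⁻ s in Ioc 0 t, ENNReal.ofReal (g s) ∂L.measure
        = ENNReal.ofReal (g t) * L.measure (Ioc 0 t)
          + ∫⁻ u in Ioc 0 t, L.measure (Iio u ∩ Ioc 0 t) ∂f.measure := by
    intro L
    haveI : IsFiniteMeasure (L.measure.restrict (Ioc 0 t)) := by
      constructor
      rw [Measure.restrict_apply_univ, StieltjesFunction.measure_Ioc]
      exact ENNReal.ofReal_lt_top
    have h1 : ∫⁻ s in Ioc 0 t, ENNReal.ofReal (g s) ∂L.measure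
        = ∫⁻ s in Ioc 0 t,
            (ENNReal.ofReal (g t) + (f.measure.restrict (Ioc 0 t)) (Ioi s)) ∂L.measure := by
      apply setLIntegral_congr_fun measurableSet_Ioc
      intro s hs; dsimp only
      have hs' : s ∈ Icc (0:ℝ) t := ⟨le_of_lt hs.1, hs.2⟩
      have hIoi : Ioi s ∩ Ioc 0 t = Ioc s t := by
        ext u
        simp only [mem_inter_iff, mem_Ioi, mem_Ioc]
        constructor
        · rintro ⟨h1, _, h3⟩; exact ⟨h1, h3⟩
        · rintro ⟨h1, h2⟩; exact ⟨h1, lt_trans hs.1 h1, h2⟩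
      rw [Measure.restrict_apply measurableSet_Ioi, hIoi, StieltjesFunction.measure_Ioc,
        hft, hf_eq s hs']
      have hgs : g t ≤ g s := hg_anti (hIccsub hs') (hIccsub htmem) hs'.2
      have hgt : 0 ≤ g t := hg_nonneg t (hIccsub htmem)
      rw [show -g t - -g s = g s - g t by ring,
        ← ENNReal.ofReal_add hgt (by linarith)]
      congr 1
      ring
    rw [h1, lintegral_add_left measurable_const, setLIntegral_const]
    congr 1
    -- Fubini
    have hmeas : MeasurableSet {p : ℝ × ℝ | p.1 < p.2} :=
      measurableSet_lt measurable_fst measurable_snd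
    have hfub :
        ∫⁻ s, (f.measure.restrict (Ioc 0 t)) (Ioi s) ∂(L.measure.restrict (Ioc 0 t))
          = ∫⁻ u, (L.measure.restrict (Ioc 0 t)) (Iio u) ∂(f.measure.restrict (Ioc 0 t)) := by
      exact ((Measure.prod_apply hmeas).symm.trans (Measure.prod_apply_symm hmeas))
    rw [hfub]
    refine setLIntegral_congr_fun measurableSet_Ioc ?_
    intro u _; dsimp only
    rw [Measure.restrict_apply measurableSet_Iio]
  have hνIoc : f.measure (Ioc 0 t) = ENNReal.ofReal (g 0 - g t) := by
    rw [StieltjesFunction.measure_Ioc, hft, hf0]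
    congr 1
    ring
  -- a.e. comparison for the second terms
  have hcomp : ∫⁻ u in Ioc 0 t, ℓ.measure (Iio u ∩ Ioc 0 t) ∂f.measure
      ≤ (∫⁻ u in Ioc 0 t, ℓ'.measure (Iio u ∩ Ioc 0 t) ∂f.measure)
          + ENNReal.ofReal S * ENNReal.ofReal (g 0 - g t) := by
    have hcount : ({x : ℝ | ¬ContinuousAt ℓ' x}).Countable :=
      ℓ'.mono.countable_not_continuousAt
    have h_ae : ∀ᵐ u ∂f.measure, ContinuousAt ℓ' u := by
      rw [ae_iff]
      exact hcount.measure_zero _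
    have hstep : ∫⁻ u in Ioc 0 t, ℓ.measure (Iio u ∩ Ioc 0 t) ∂f.measure
        ≤ ∫⁻ u in Ioc 0 t,
            (ℓ'.measure (Iio u ∩ Ioc 0 t) + ENNReal.ofReal S) ∂f.measure := by
      apply lintegral_mono_ae
      filter_upwards [ae_restrict_of_ae h_ae, ae_restrict_mem measurableSet_Ioc]
        with u hu hmem
      have hIio : Iio u ∩ Ioc 0 t = Ioo 0 u := by
        ext v
        simp only [mem_inter_iff, mem_Iio, mem_Ioc, mem_Ioo]
        constructor
        · rintro ⟨h1, h2, _⟩; exact ⟨h2, h1⟩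
        · rintro ⟨h1, h2⟩; exact ⟨h2, h1, (le_of_lt h2).trans hmem.2⟩
      rw [hIio, StieltjesFunction.measure_Ioo, StieltjesFunction.measure_Ioo]
      have hll' : Function.leftLim (ℓ' : ℝ → ℝ) u = ℓ' u :=
        leftLim_eq_of_tendsto hu.continuousWithinAt
      rw [hll', hℓ0, hℓ'0, sub_zero, sub_zero]
      have h1 : Function.leftLim (ℓ : ℝ → ℝ) u ≤ ℓ u := ℓ.mono.leftLim_le le_rfl
      have h2 : ℓ u ≤ ℓ' u + S := hle u ⟨le_of_lt hmem.1, hmem.2⟩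
      have h3 : (0:ℝ) ≤ ℓ' u := hℓ'0 ▸ ℓ'.mono (le_of_lt hmem.1)
      calc ENNReal.ofReal (Function.leftLim (ℓ : ℝ → ℝ) u)
          ≤ ENNReal.ofReal (ℓ' u + S) := ENNReal.ofReal_le_ofReal (h1.trans h2)
        _ = ENNReal.ofReal (ℓ' u) + ENNReal.ofReal S := ENNReal.ofReal_add h3 hS0
    calc ∫⁻ u in Ioc 0 t, ℓ.measure (Iio u ∩ Ioc 0 t) ∂f.measure
        ≤ ∫⁻ u in Ioc 0 t,
            (ℓ'.measure (Iio u ∩ Ioc 0 t) + ENNReal.ofReal S) ∂f.measure := hstep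
      _ = (∫⁻ u in Ioc 0 t, ℓ'.measure (Iio u ∩ Ioc 0 t) ∂f.measure)
            + ENNReal.ofReal S * f.measure (Ioc 0 t) := by
          rw [lintegral_add_right _ measurable_const, setLIntegral_const]
      _ = _ := by rw [hνIoc]
  -- finiteness of the ℓ' integral
  have hA'fin : (∫⁻ s in Ioc 0 t, ENNReal.ofReal (g s) ∂ℓ'.measure) ≠ ⊤ := by
    have hb : ∫⁻ s in Ioc 0 t, ENNReal.ofReal (g s) ∂ℓ'.measure
        ≤ ∫⁻ _ in Ioc 0 t, ENNReal.ofReal (g 0) ∂ℓ'.measure := by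
      apply lintegral_mono_ae
      filter_upwards [ae_restrict_mem measurableSet_Ioc] with s hs
      exact ENNReal.ofReal_le_ofReal
        (hg_anti h0mem (hIccsub ⟨le_of_lt hs.1, hs.2⟩) (le_of_lt hs.1))
    refine ne_top_of_le_ne_top ?_ hb
    rw [setLIntegral_const, StieltjesFunction.measure_Ioc]
    exact ENNReal.mul_ne_top ENNReal.ofReal_ne_top ENNReal.ofReal_ne_top
  -- the main ℝ≥0∞ estimate
  have hmain : (∫⁻ s in Ioc 0 t, ENNReal.ofReal (g s) ∂ℓ.measure)
      ≤ (∫⁻ s in Ioc 0 t, ENNReal.ofReal (g s) ∂ℓ'.measure)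
          + ENNReal.ofReal (g 0 * S) := by
    rw [key ℓ, key ℓ']
    have hgt : 0 ≤ g t := hg_nonneg t (hIccsub htmem)
    have hmeasℓ : ℓ.measure (Ioc 0 t)
        ≤ ℓ'.measure (Ioc 0 t) + ENNReal.ofReal S := by
      rw [StieltjesFunction.measure_Ioc, StieltjesFunction.measure_Ioc, hℓ0, hℓ'0,
        sub_zero, sub_zero, ← ENNReal.ofReal_add (hℓ'0 ▸ ℓ'.mono ht0) hS0]
      exact ENNReal.ofReal_le_ofReal (hle t htmem)
    calc ENNReal.ofReal (g t) * ℓ.measure (Ioc 0 t)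
          + ∫⁻ u in Ioc 0 t, ℓ.measure (Iio u ∩ Ioc 0 t) ∂f.measure
        ≤ ENNReal.ofReal (g t) * (ℓ'.measure (Ioc 0 t) + ENNReal.ofReal S)
          + ((∫⁻ u in Ioc 0 t, ℓ'.measure (Iio u ∩ Ioc 0 t) ∂f.measure)
              + ENNReal.ofReal S * ENNReal.ofReal (g 0 - g t)) :=
          add_le_add (mul_le_mul_right hmeasℓ _) hcomp
      _ = (ENNReal.ofReal (g t) * ℓ'.measure (Ioc 0 t)
            + ∫⁻ u in Ioc 0 t, ℓ'.measure (Iio u ∩ Ioc 0 t) ∂f.measure)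
          + (ENNReal.ofReal (g t) + ENNReal.ofReal (g 0 - g t)) * ENNReal.ofReal S := by
          ring
      _ = _ := by
          have hsub : 0 ≤ g 0 - g t :=
            sub_nonneg.2 (hg_anti h0mem (hIccsub htmem) ht0)
          rw [← ENNReal.ofReal_add hgt hsub,
            show g t + (g 0 - g t) = g 0 by ring,
            ← ENNReal.ofReal_mul hg0]
  -- convert Bochner to lintegral
  have hmeasg : ∀ L : StieltjesFunction ℝ,
      ∫ s in Ioc (0:ℝ) t, g s ∂L.measure
        = (∫⁻ s in Ioc 0 t, ENNReal.ofReal (g s) ∂L.measure).toReal := by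
    intro L
    rw [integral_eq_lintegral_of_nonneg_ae]
    · exact (ae_restrict_iff' measurableSet_Ioc).2
        (ae_of_all _ fun s hs => hg_nonneg s (hIccsub ⟨le_of_lt hs.1, hs.2⟩))
    · exact (hg_cont.mono (fun x hx => hIccsub ⟨le_of_lt hx.1, hx.2⟩)).aestronglyMeasurable
        measurableSet_Ioc
  set x : ℝ := ∫ s in Ioc (0:ℝ) t, g s ∂ℓ.measure with hx_def
  set y : ℝ := ∫ s in Ioc (0:ℝ) t, g s ∂ℓ'.measure with hy_def
  have hxy : x - y ≤ g 0 * S := by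
    have hx : x = (∫⁻ s in Ioc 0 t, ENNReal.ofReal (g s) ∂ℓ.measure).toReal := hmeasg ℓ
    have hy : y = (∫⁻ s in Ioc 0 t, ENNReal.ofReal (g s) ∂ℓ'.measure).toReal := hmeasg ℓ'
    have htop : ((∫⁻ s in Ioc 0 t, ENNReal.ofReal (g s) ∂ℓ'.measure)
        + ENNReal.ofReal (g 0 * S)) ≠ ⊤ :=
      ENNReal.add_ne_top.2 ⟨hA'fin, ENNReal.ofReal_ne_top⟩
    have := ENNReal.toReal_mono htop hmain
    rw [ENNReal.toReal_add hA'fin ENNReal.ofReal_ne_top,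
      ENNReal.toReal_ofReal (mul_nonneg hg0 hS0)] at this
    rw [hx, hy]
    linarith
  rcases le_total x y with hxy' | hxy'
  · have h1 : F x - F y ≤ 0 := sub_nonpos.2 (hFmono hxy')
    have h2 : (0:ℝ) ≤ g 0 * (K : ℝ) * S :=
      mul_nonneg (mul_nonneg hg0 K.2) hS0
    linarith
  · have hd : dist (F x) (F y) ≤ (K : ℝ) * dist x y := hFlip.dist_le_mul x y
    rw [Real.dist_eq, Real.dist_eq, abs_of_nonneg (sub_nonneg.2 hxy')] at hd
    have h1 : F x - F y ≤ |F x - F y| := le_abs_self _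
    have h2 : (K : ℝ) * (x - y) ≤ (K : ℝ) * (g 0 * S) :=
      mul_le_mul_of_nonneg_left hxy K.2
    calc F x - F y ≤ (K : ℝ) * (x - y) := h1.trans hd
      _ ≤ (K : ℝ) * (g 0 * S) := h2
      _ = g 0 * (K : ℝ) * S := by ring
end

section
/- (Occurrence of an instantaneous default cascade.) In the four-type core-periphery mean field model, suppose at some time t there exists a pair of groups i,j∈{1,…,4} with λ̃_{ij}>0 and λ̃_{ji}>0 such that ∫₀^{Θ_i(t,ε)} V^i_{t−}(x)dx ≥ λ̃_{ij}^{−1}ε and ∫₀^{Θ_j(t,ε)} V^j_{t−}(x)dx ≥ λ̃_{ji}^{−1}ε for all sufficiently small ε>0, where V^l_{t−} are the left-limit densities of the distances-to-default of the four collections. Then the mean field cascade condition cannot give ΔL(t)=0: there must be a jump discontinuity (an instantaneous macroscopic default cascade) at time t. -/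
open MeasureTheory Set
open scoped Classical

noncomputable section

/-- The Stieltjes function built from `f` when `f` is monotone and right-continuous
(and a junk value otherwise). -/
def mkStieltjes (f : ℝ → ℝ) : StieltjesFunction ℝ :=
  if h : Monotone f ∧ ∀ x, ContinuousWithinAt f (Set.Ici x) x then
    { toFun := f, mono' := h.1, right_continuous' := h.2 }
  else StieltjesFunction.id

/-- The left-limit Stieltjes integral `∫_{(0,t)} g dF`. -/
def stIntL (g f : ℝ → ℝ) (t : ℝ) : ℝ := ∫ s in Set.Ioo 0 t, g s ∂(mkStieltjes f).measure

/-- The aggregated exposure `L_l = Σ_i λ̃_{il} L̃_i` of group `l`. -/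
def aggLoss (lam : Fin 4 → Fin 4 → ℝ) (Ltil : Fin 4 → ℝ → ℝ) (l : Fin 4)
    (s : ℝ) : ℝ :=
  ∑ i, lam i l * Ltil i s

/-- The shift map
`Θ_l(t,z) = log(1 + C_l ∫₀^{t−}(1−s/T)dL_l + C_l(1−t/T)z)
           − log(1 + C_l ∫₀^{t−}(1−s/T)dL_l)`. -/
def fourTheta (T : ℝ) (C : Fin 4 → ℝ) (lam : Fin 4 → Fin 4 → ℝ)
    (Ltil : Fin 4 → ℝ → ℝ) (t : ℝ) (l : Fin 4) (z : ℝ) : ℝ :=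
  Real.log (1 + C l * stIntL (fun s => 1 - s / T) (aggLoss lam Ltil l) t +
      C l * (1 - t / T) * z) -
    Real.log (1 + C l * stIntL (fun s => 1 - s / T) (aggLoss lam Ltil l) t)

/-- The cascade map `Ξ_l(t,z) = Σ_i λ̃_{il} ∫₀^{Θ_i(t,z_i)} V^i_{t−}(x) dx`. -/
def fourXi (T : ℝ) (C : Fin 4 → ℝ) (lam : Fin 4 → Fin 4 → ℝ)
    (Ltil : Fin 4 → ℝ → ℝ) (V : Fin 4 → ℝ → ℝ) (t : ℝ)
    (l : Fin 4) (z : Fin 4 → ℝ) : ℝ :=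
  ∑ i, lam i l * ∫ x in Ioc (0:ℝ) (fourTheta T C lam Ltil t i (z i)), V i x

/-- The cascade iterates `Δ^{(0,ε)}_{t,l} = Ξ_l(t,ε)`,
`Δ^{(m,ε)}_{t,l} = Ξ_l(t, ε + Δ^{(m−1,ε)}_{t,·})`. -/
def fourDelta (T : ℝ) (C : Fin 4 → ℝ) (lam : Fin 4 → Fin 4 → ℝ)
    (Ltil : Fin 4 → ℝ → ℝ) (V : Fin 4 → ℝ → ℝ) (t : ℝ) (e : ℝ) :
    ℕ → Fin 4 → ℝ
  | 0 => fun l => fourXi T C lam Ltil V t l (fun _ => e)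
  | m + 1 => fun l =>
      fourXi T C lam Ltil V t l (fun i => e + fourDelta T C lam Ltil V t e m i)

end

/-- Occurrence of an instantaneous default cascade: in the four-type
core-periphery mean field model, if at some time `t` there is a mutually exposed pair
of groups `i, j` (`λ̃_{ij} > 0`, `λ̃_{ji} > 0`) with
`∫₀^{Θ_i(t,ε)} V^i_{t−} ≥ λ̃_{ij}⁻¹ ε` and `∫₀^{Θ_j(t,ε)} V^j_{t−} ≥ λ̃_{ji}⁻¹ ε` for
all small `ε > 0`, then the mean field cascade condition cannot give `ΔL(t) = 0`:
there must be a jump discontinuity. -/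
theorem four_type_cascade_must_jump
    (T : ℝ) (hT : 0 < T) (t : ℝ) (ht : 0 ≤ t) (htT : t < T)
    (C : Fin 4 → ℝ) (hC : ∀ l, 0 < C l)
    (lam : Fin 4 → Fin 4 → ℝ) (hlam : ∀ i j, 0 ≤ lam i j)
    -- the four loss processes, increasing and right-continuous, started at `0`
    (Ltil : Fin 4 → ℝ → ℝ)
    (hLtil_mono : ∀ l, Monotone (Ltil l))
    (hLtil_rc : ∀ l x, ContinuousWithinAt (Ltil l) (Set.Ici x) x)
    (hLtil0 : ∀ l, Ltil l 0 = 0)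
    (hLtil_le1 : ∀ l s, Ltil l s ≤ 1)
    -- the left-limit densities of the distances-to-default at time `t`
    (V : Fin 4 → ℝ → ℝ)
    (hVnonneg : ∀ l x, 0 ≤ V l x)
    (hVint : ∀ l, IntegrableOn (V l) (Set.Ioi 0) volume)
    -- the mutually exposed pair with non-vanishing mass near the boundary
    (i j : Fin 4) (hij : 0 < lam i j) (hji : 0 < lam j i)
    (ε₀ : ℝ) (hε₀ : 0 < ε₀)
    (hmass_i : ∀ e : ℝ, 0 < e → e ≤ ε₀ →
      (lam i j)⁻¹ * e ≤ ∫ x in Set.Ioc (0:ℝ) (fourTheta T C lam Ltil t i e), V i x)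
    (hmass_j : ∀ e : ℝ, 0 < e → e ≤ ε₀ →
      (lam j i)⁻¹ * e ≤ ∫ x in Set.Ioc (0:ℝ) (fourTheta T C lam Ltil t j e), V j x) :
    ¬ (∀ l : Fin 4,
        (⨅ e : {e : ℝ // 0 < e}, ⨆ m : ℕ, fourDelta T C lam Ltil V t e.1 m l) = 0) := by
  intro H
  set θ := fourTheta T C lam Ltil t with hθdef
  set Ξ := fourXi T C lam Ltil V t with hΞdef
  set Δ := fourDelta T C lam Ltil V t with hΔdef
  -- basic positivity facts
  have hbT : 0 < 1 - t / T := by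
    have : t / T < 1 := (div_lt_one hT).2 htT
    linarith
  have ha : ∀ l : Fin 4,
      0 ≤ stIntL (fun s => 1 - s / T) (aggLoss lam Ltil l) t := by
    intro l
    refine setIntegral_nonneg measurableSet_Ioo fun s hs => ?_
    have : s / T ≤ 1 := (div_le_one hT).2 (le_of_lt (hs.2.trans htT))
    linarith
  -- monotonicity of Θ in z on nonnegative z
  have hθmono : ∀ (l : Fin 4) {z1 z2 : ℝ}, 0 ≤ z1 → z1 ≤ z2 → θ l z1 ≤ θ l z2 := by
    intro l z1 z2 h0 h12
    have hCl := (hC l).le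
    have haa : 0 ≤ C l * stIntL (fun s => 1 - s / T) (aggLoss lam Ltil l) t :=
      mul_nonneg hCl (ha l)
    have hb : 0 ≤ C l * (1 - t / T) := mul_nonneg hCl hbT.le
    have hpos : 0 < 1 + C l * stIntL (fun s => 1 - s / T) (aggLoss lam Ltil l) t +
        C l * (1 - t / T) * z1 := by nlinarith [mul_nonneg hb h0]
    have hle : 1 + C l * stIntL (fun s => 1 - s / T) (aggLoss lam Ltil l) t +
        C l * (1 - t / T) * z1 ≤
        1 + C l * stIntL (fun s => 1 - s / T) (aggLoss lam Ltil l) t +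
        C l * (1 - t / T) * z2 := by nlinarith [mul_le_mul_of_nonneg_left h12 hb]
    exact sub_le_sub_right (Real.log_le_log hpos hle) _
  -- integral facts
  have hVint' : ∀ (l : Fin 4) (u : ℝ), IntegrableOn (V l) (Set.Ioc 0 u) volume :=
    fun l u => (hVint l).mono_set Set.Ioc_subset_Ioi_self
  have hInonneg : ∀ (l : Fin 4) (u : ℝ), 0 ≤ ∫ x in Set.Ioc (0:ℝ) u, V l x :=
    fun l u => setIntegral_nonneg measurableSet_Ioc fun x _ => hVnonneg l x
  have hImono : ∀ (l : Fin 4) {u1 u2 : ℝ}, u1 ≤ u2 →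
      (∫ x in Set.Ioc (0:ℝ) u1, V l x) ≤ ∫ x in Set.Ioc (0:ℝ) u2, V l x := by
    intro l u1 u2 h
    exact setIntegral_mono_set (hVint' l u2)
      (Filter.Eventually.of_forall fun x => hVnonneg l x)
      (HasSubset.Subset.eventuallyLE (Set.Ioc_subset_Ioc_right h))
  have hIbdd : ∀ (l : Fin 4) (u : ℝ),
      (∫ x in Set.Ioc (0:ℝ) u, V l x) ≤ ∫ x in Set.Ioi (0:ℝ), V l x := by
    intro l u
    exact setIntegral_mono_set (hVint l)
      (Filter.Eventually.of_forall fun x => hVnonneg l x)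
      (HasSubset.Subset.eventuallyLE Set.Ioc_subset_Ioi_self)
  -- Ξ facts
  have hΞnonneg : ∀ (l : Fin 4) (z : Fin 4 → ℝ), 0 ≤ Ξ l z := by
    intro l z
    refine Finset.sum_nonneg fun k _ => mul_nonneg (hlam k l) (hInonneg k _)
  have hΞmono : ∀ (l : Fin 4) {z1 z2 : Fin 4 → ℝ}, (∀ k, 0 ≤ z1 k) →
      (∀ k, z1 k ≤ z2 k) → Ξ l z1 ≤ Ξ l z2 := by
    intro l z1 z2 h0 h12
    refine Finset.sum_le_sum fun k _ => ?_
    exact mul_le_mul_of_nonneg_left (hImono k (hθmono k (h0 k) (h12 k))) (hlam k l)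
  set B : Fin 4 → ℝ := fun l => ∑ k, lam k l * ∫ x in Set.Ioi (0:ℝ), V k x with hBdef
  have hΞbdd : ∀ (l : Fin 4) (z : Fin 4 → ℝ), Ξ l z ≤ B l := by
    intro l z
    refine Finset.sum_le_sum fun k _ => ?_
    exact mul_le_mul_of_nonneg_left (hIbdd k _) (hlam k l)
  -- Δ facts
  have hΔnonneg : ∀ (e : ℝ) (m : ℕ) (l : Fin 4), 0 ≤ Δ e m l := by
    intro e m l
    cases m with
    | zero => exact hΞnonneg l _
    | succ m => exact hΞnonneg l _
  have hΔbdd : ∀ (e : ℝ) (m : ℕ) (l : Fin 4), Δ e m l ≤ B l := by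
    intro e m l
    cases m with
    | zero => exact hΞbdd l _
    | succ m => exact hΞbdd l _
  have hΔmono_e : ∀ {e1 e2 : ℝ}, 0 ≤ e1 → e1 ≤ e2 → ∀ (m : ℕ) (l : Fin 4),
      Δ e1 m l ≤ Δ e2 m l := by
    intro e1 e2 h0 h12 m
    induction m with
    | zero => intro l; exact hΞmono l (fun _ => h0) (fun _ => h12)
    | succ m ih =>
        intro l
        refine hΞmono l (fun k => add_nonneg h0 (hΔnonneg e1 m k))
          (fun k => add_le_add h12 (ih k))
  have hbdda : ∀ (e : ℝ) (l : Fin 4), BddAbove (Set.range fun m => Δ e m l) := by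
    intro e l
    exact ⟨B l, by rintro x ⟨m, rfl⟩; exact hΔbdd e m l⟩
  set D : ℝ → Fin 4 → ℝ := fun e l => ⨆ m : ℕ, Δ e m l with hDdef
  have hDmono_e : ∀ {e1 e2 : ℝ}, 0 ≤ e1 → e1 ≤ e2 → ∀ l, D e1 l ≤ D e2 l := by
    intro e1 e2 h0 h12 l
    exact ciSup_le fun m => (hΔmono_e h0 h12 m l).trans (le_ciSup (hbdda e2 l) m)
  -- extract small e from the hypothesis
  haveI : Nonempty {e : ℝ // 0 < e} := ⟨⟨1, one_pos⟩⟩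
  have hhalf : 0 < ε₀ / 2 := by linarith
  obtain ⟨e1, he1⟩ : ∃ e : {e : ℝ // 0 < e}, D e.1 i < ε₀ / 2 := by
    refine exists_lt_of_ciInf_lt ?_
    rw [H i]; exact hhalf
  obtain ⟨e2, he2⟩ : ∃ e : {e : ℝ // 0 < e}, D e.1 j < ε₀ / 2 := by
    refine exists_lt_of_ciInf_lt ?_
    rw [H j]; exact hhalf
  set e : ℝ := min (min e1.1 e2.1) (ε₀ / 2) with hedef
  have hepos : 0 < e := lt_min (lt_min e1.2 e2.2) hhalf
  have heε : e ≤ ε₀ / 2 := min_le_right _ _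
  have hDi : D e i < ε₀ / 2 :=
    lt_of_le_of_lt (hDmono_e hepos.le ((min_le_left _ _).trans (min_le_left _ _)) i) he1
  have hDj : D e j < ε₀ / 2 :=
    lt_of_le_of_lt (hDmono_e hepos.le ((min_le_left _ _).trans (min_le_right _ _)) j) he2
  have hΔleD : ∀ (m : ℕ) (l : Fin 4), Δ e m l ≤ D e l :=
    fun m l => le_ciSup (hbdda e l) m
  -- the key recursion lower bound
  have hkey : ∀ (a b : Fin 4), 0 < lam a b → D e a < ε₀ / 2 →
      (∀ z : ℝ, 0 < z → z ≤ ε₀ →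
        (lam a b)⁻¹ * z ≤ ∫ x in Set.Ioc (0:ℝ) (θ a z), V a x) →
      ∀ m : ℕ, e + Δ e m a ≤ Δ e (m + 1) b := by
    intro a b hab hDa hmass m
    have hz : 0 < e + Δ e m a := lt_of_lt_of_le hepos (by linarith [hΔnonneg e m a])
    have hzε : e + Δ e m a ≤ ε₀ := by
      have h2 : Δ e m a ≤ D e a := hΔleD m a
      linarith
    have hterm : e + Δ e m a ≤
        lam a b * ∫ x in Set.Ioc (0:ℝ) (θ a (e + Δ e m a)), V a x := by
      have := hmass (e + Δ e m a) hz hzε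
      have h4 := mul_le_mul_of_nonneg_left this (hlam a b)
      rwa [← mul_assoc, mul_inv_cancel₀ hab.ne', one_mul] at h4
    have hrec : Δ e (m + 1) b = Ξ b (fun k => e + Δ e m k) := rfl
    have hsum : Ξ b (fun k => e + Δ e m k) =
        ∑ k, lam k b * ∫ x in Set.Ioc (0:ℝ) (θ k (e + Δ e m k)), V k x := rfl
    rw [hrec, hsum]
    exact hterm.trans (Finset.single_le_sum
      (f := fun k => lam k b * ∫ x in Set.Ioc (0:ℝ) (θ k (e + Δ e m k)), V k x)
      (fun k _ => mul_nonneg (hlam k b) (hInonneg k _)) (Finset.mem_univ a))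
  have h1 : D e i ≤ D e j - e :=
    ciSup_le fun m => by
      have h := hkey i j hij hDi hmass_i m
      have h2 := hΔleD (m + 1) j
      linarith
  have h2 : D e j ≤ D e i - e :=
    ciSup_le fun m => by
      have h := hkey j i hji hDj hmass_j m
      have h2 := hΔleD (m + 1) i
      linarith
  linarith
end
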